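/- arXiv:2604.05330 — 2 statements merged into one kernel-verified Lean document; each statement's English description precedes it below -/
import Mathlib

section
/- Let k be a complete nonarchimedean valued field. The Banach k-vector space C_bd(ℚ, k) of bounded continuous functions ℚ → k is isometrically isomorphic to k × C₀(ℕ, C_bd(ℚ, k)) with the maximum norm on the product. -/
open scoped BoundedContinuousFunction ZeroAtInfty

/-!
If `X` is obtained by gluing countably many copies `Yₙ` of `Y` that converge to a point `x₀`,
i.e. `X ≅ ((ω + 1) × Y) / ({ω} × Y)`, then `f ↦ (f x₀, (f|Yₙ - f x₀)ₙ)` maps `C_bd(X, E)`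
bijectively onto `E × C₀(ℕ, C_bd(Y, E))`: continuity of `f` at `x₀` makes the sequence tend
to `0`, and conversely a pair `(c, G)` glues to a function that is continuous at `x₀` because
`Gₙ → 0`. For an ultrametric norm, `‖f x‖ ≤ max ‖f x - f x₀‖ ‖f x₀‖` makes this map isometric.

`ℚ` is such a gluing at `0`: the bands `√2 / (m + 1) < ±q < √2 / m` have irrational endpoints,
so they are open, cover `ℚ \ {0}`, shrink to `0`, and each is homeomorphic to `ℚ` by Cantor's
back-and-forth theorem.
-/

open Set Filter Topology BoundedContinuousFunction

/-- `X \ {x₀}` is the disjoint union of the open fibres of `index` (whose value at `x₀` plays no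
role), each a copy of `Y`, and the sets `{x₀} ∪ ⋃_{n ≥ N} (n-th copy)` form a neighbourhood basis
of `x₀`. -/
structure ConvergingCopies {X : Type*} [TopologicalSpace X] (x₀ : X) (Y : Type*)
    [TopologicalSpace Y] where
  index : X → ℕ
  isOpen_piece (n : ℕ) : IsOpen {x | x ≠ x₀ ∧ index x = n}
  homeo (n : ℕ) : Y ≃ₜ {x | x ≠ x₀ ∧ index x = n}
  tendsto_index : Tendsto index (𝓝[≠] x₀) atTop
  eventually_piece_subset {U : Set X} (hU : U ∈ 𝓝 x₀) :
    ∀ᶠ n in atTop, {x | x ≠ x₀ ∧ index x = n} ⊆ U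

namespace ConvergingCopies

variable {X Y 𝕜 E : Type*} [TopologicalSpace X] [TopologicalSpace Y] {x₀ : X}
  (D : ConvergingCopies x₀ Y) [NormedField 𝕜] [NormedAddCommGroup E] [NormedSpace 𝕜 E]

lemma exists_homeo_apply_eq {x : X} (hx : x ≠ x₀) : ∃ n y, (D.homeo n y : X) = x :=
  ⟨D.index x, (D.homeo _).symm ⟨x, hx, rfl⟩, by simp⟩

noncomputable section

def piece (f : X →ᵇ E) (n : ℕ) : Y →ᵇ E :=
  f.compContinuous ⟨fun y ↦ D.homeo n y, by fun_prop⟩ - const Y (f x₀)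

@[simp]
lemma piece_apply (f : X →ᵇ E) (n : ℕ) (y : Y) : D.piece f n y = f (D.homeo n y) - f x₀ := rfl

lemma tendsto_piece (f : X →ᵇ E) : Tendsto (D.piece f) atTop (𝓝 0) := by
  refine Metric.tendsto_nhds.2 fun ε hε ↦ ?_
  have hU : {x | dist (f x) (f x₀) < ε / 2} ∈ 𝓝 x₀ :=
    f.continuous.continuousAt.preimage_mem_nhds (Metric.ball_mem_nhds _ (half_pos hε))
  filter_upwards [D.eventually_piece_subset hU] with n hn
  rw [dist_zero_right]
  refine ((norm_le (half_pos hε).le).2 fun y ↦ ?_).trans_lt (half_lt_self hε)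
  rw [piece_apply, ← dist_eq_norm]
  exact (hn (D.homeo n y).2).le

lemma norm_piece_le [IsUltrametricDist E] (f : X →ᵇ E) (n : ℕ) : ‖D.piece f n‖ ≤ ‖f‖ := by
  refine (norm_le (norm_nonneg f)).2 fun y ↦ ?_
  simpa [dist_eq_norm] using (dist_triangle_max (f (D.homeo n y)) 0 (f x₀)).trans
    (max_le (by simpa using f.norm_coe_le_norm _) (by simpa using f.norm_coe_le_norm _))

def pieces (f : X →ᵇ E) : C₀(ℕ, Y →ᵇ E) where
  toFun := D.piece f
  continuous_toFun := continuous_of_discreteTopology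
  zero_at_infty' := by rw [cocompact_eq_atTop]; exact D.tendsto_piece f

def split : (X →ᵇ E) →ₗ[𝕜] E × C₀(ℕ, Y →ᵇ E) where
  toFun f := (f x₀, D.pieces f)
  map_add' f g := Prod.ext rfl (by ext; simp [pieces, add_sub_add_comm])
  map_smul' c f := Prod.ext rfl (by ext; simp [pieces, smul_sub])

lemma norm_split [IsUltrametricDist E] (f : X →ᵇ E) : ‖D.split (𝕜 := 𝕜) f‖ = ‖f‖ := by
  refine le_antisymm ?_ ((norm_le (norm_nonneg _)).2 fun x ↦ ?_)
  · refine max_le (f.norm_coe_le_norm x₀) ?_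
    rw [← ZeroAtInftyContinuousMap.norm_toBCF_eq_norm]
    exact (norm_le (norm_nonneg f)).2 (D.norm_piece_le f)
  obtain rfl | hx := eq_or_ne x x₀
  · exact le_max_left _ _
  obtain ⟨n, y, rfl⟩ := D.exists_homeo_apply_eq hx
  have hy : ‖D.piece f n y‖ ≤ ‖D.pieces f‖ := by
    rw [← ZeroAtInftyContinuousMap.norm_toBCF_eq_norm]
    exact ((D.piece f n).norm_coe_le_norm y).trans ((D.pieces f).toBCF.norm_coe_le_norm n)
  calc ‖f (D.homeo n y)‖ = ‖D.piece f n y + f x₀‖ := by simp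
    _ ≤ max ‖D.piece f n y‖ ‖f x₀‖ := IsUltrametricDist.norm_add_le_max _ _
    _ ≤ ‖D.split (𝕜 := 𝕜) f‖ := max_le (hy.trans (le_max_right _ _)) (le_max_left _ _)

open scoped Classical in
def glueFun (c : E) (G : C₀(ℕ, Y →ᵇ E)) (x : X) : E :=
  if hx : x = x₀ then c else c + G (D.index x) ((D.homeo _).symm ⟨x, hx, rfl⟩)

variable {D} {c : E} {G : C₀(ℕ, Y →ᵇ E)}

lemma glueFun_self : D.glueFun c G x₀ = c := dif_pos rfl

lemma glueFun_of_mem {n : ℕ} {x : X} (hx : x ∈ {x | x ≠ x₀ ∧ D.index x = n}) :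
    D.glueFun c G x = c + G n ((D.homeo n).symm ⟨x, hx⟩) := by
  obtain ⟨hx, rfl⟩ := hx
  exact dif_neg hx

lemma glueFun_homeo_apply (n : ℕ) (y : Y) : D.glueFun c G (D.homeo n y) = c + G n y := by
  simp [glueFun_of_mem (D.homeo n y).2]

lemma continuous_glueFun : Continuous (D.glueFun c G) := by
  refine continuous_iff_continuousAt.2 fun x ↦ ?_
  obtain rfl | hx := eq_or_ne x x₀
  · have hG : Tendsto (fun n ↦ ‖G n‖) atTop (𝓝 0) := by
      simpa [cocompact_eq_atTop] using G.zero_at_infty'.norm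
    rw [← continuousWithinAt_compl_self, ContinuousWithinAt, glueFun_self,
      tendsto_iff_norm_sub_tendsto_zero]
    refine squeeze_zero_norm' ?_ (hG.comp D.tendsto_index)
    filter_upwards [self_mem_nhdsWithin] with x hx
    rw [glueFun_of_mem ⟨hx, rfl⟩, add_sub_cancel_left, norm_norm]
    exact (G _).norm_coe_le_norm _
  · have hopen := D.isOpen_piece (D.index x)
    refine ContinuousOn.continuousAt ?_ (hopen.mem_nhds ⟨hx, rfl⟩)
    rw [continuousOn_iff_continuous_domRestrict]
    have : {x' | x' ≠ x₀ ∧ D.index x' = D.index x}.domRestrict (D.glueFun c G) =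
        fun x' ↦ c + G _ ((D.homeo _).symm x') := funext fun x' ↦ glueFun_of_mem x'.2
    rw [this]
    fun_prop

variable (D c G)

def glue : X →ᵇ E :=
  .ofNormedAddCommGroup (D.glueFun c G) continuous_glueFun (‖c‖ + ‖G‖) fun x ↦ by
    obtain rfl | hx := eq_or_ne x x₀
    · simp [glueFun_self]
    obtain ⟨n, y, rfl⟩ := D.exists_homeo_apply_eq hx
    rw [glueFun_homeo_apply, ← ZeroAtInftyContinuousMap.norm_toBCF_eq_norm]
    exact (norm_add_le _ _).trans (add_le_add_right
      (((G n).norm_coe_le_norm y).trans (G.toBCF.norm_coe_le_norm n)) _)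

lemma split_glue : D.split (𝕜 := 𝕜) (D.glue c G) = (c, G) := by
  refine Prod.ext glueFun_self ?_
  ext n y
  simp [split, pieces, glue, glueFun_homeo_apply, glueFun_self]

def linearIsometryEquiv [IsUltrametricDist E] :
    (X →ᵇ E) ≃ₗᵢ[𝕜] E × C₀(ℕ, Y →ᵇ E) :=
  .ofSurjective ⟨D.split, D.norm_split⟩ fun p ↦ ⟨D.glue p.1 p.2, D.split_glue p.1 p.2⟩

end

end ConvergingCopies

lemma nonempty_homeomorph_rat_preimage {T : Set ℝ} (hT : IsOpen T) (hc : T.OrdConnected)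
    (hne : T.Nonempty) : Nonempty (ℚ ≃ₜ ((↑) : ℚ → ℝ) ⁻¹' T) := by
  set S : Set ℚ := (↑) ⁻¹' T
  have hS : IsOpen S := hT.preimage Rat.continuous_coe_real
  have : S.OrdConnected := hc.preimage_mono Rat.cast_mono
  have : Nonempty S := nonempty_subtype.2 ((Rat.denseRange_cast (𝕜 := ℝ)).exists_mem_open hT hne)
  have : NoMaxOrder S := ⟨fun ⟨q, hq⟩ ↦ by
    obtain ⟨l, hql, hl⟩ := exists_Ico_subset_of_mem_nhds (hS.mem_nhds hq) (exists_gt q)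
    obtain ⟨r, hqr, hrl⟩ := exists_between hql
    exact ⟨⟨r, hl ⟨hqr.le, hrl⟩⟩, hqr⟩⟩
  have : NoMinOrder S := ⟨fun ⟨q, hq⟩ ↦ by
    obtain ⟨l, hlq, hl⟩ := exists_Ioc_subset_of_mem_nhds (hS.mem_nhds hq) (exists_lt q)
    obtain ⟨r, hlr, hrq⟩ := exists_between hlq
    exact ⟨⟨r, hl ⟨hlr, hrq.le⟩⟩, hrq⟩⟩
  exact (Order.iso_of_countable_dense ℚ S).map OrderIso.toHomeomorph

def sqrtTwoBand (m : ℕ) : Set ℝ := {x | m * x < √2 ∧ √2 < (m + 1) * x}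

lemma isOpen_sqrtTwoBand (m : ℕ) : IsOpen (sqrtTwoBand m) :=
  (isOpen_lt (by fun_prop) continuous_const).and (isOpen_lt continuous_const (by fun_prop))

lemma ordConnected_sqrtTwoBand (m : ℕ) : (sqrtTwoBand m).OrdConnected := by
  refine ⟨fun a ha b hb x hx ↦ ⟨?_, ?_⟩⟩
  · exact (mul_le_mul_of_nonneg_left hx.2 m.cast_nonneg).trans_lt hb.1
  · exact ha.2.trans_le (mul_le_mul_of_nonneg_left hx.1 (by positivity))

lemma sqrtTwoBand_nonempty (m : ℕ) : (sqrtTwoBand m).Nonempty := by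
  have h2 : 0 < √2 := by positivity
  refine ⟨2 * √2 / (2 * m + 1), ?_, ?_⟩
  · rw [mul_div_assoc', div_lt_iff₀ (by positivity)]
    nlinarith
  · rw [mul_div_assoc', lt_div_iff₀ (by positivity)]
    nlinarith

lemma pos_of_mem_sqrtTwoBand {m : ℕ} {x : ℝ} (hx : x ∈ sqrtTwoBand m) : 0 < x :=
  pos_of_mul_pos_right ((Real.sqrt_pos.2 two_pos).trans hx.2) (by positivity)

/-- Rationals in `sqrtTwoBand m` get index `2 * m`, those in `-sqrtTwoBand m` get `2 * m + 1`. -/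
noncomputable def ratIndex (q : ℚ) : ℕ := 2 * ⌊√2 / |(q : ℝ)|⌋₊ + if q < 0 then 1 else 0

lemma floor_sqrt_two_div_abs_eq_iff {q : ℚ} (hq : q ≠ 0) {m : ℕ} :
    ⌊√2 / |(q : ℝ)|⌋₊ = m ↔ |(q : ℝ)| ∈ sqrtTwoBand m := by
  have hpos : 0 < |(q : ℝ)| := abs_pos.2 (Rat.cast_ne_zero.2 hq)
  have hne : (m : ℝ) * |(q : ℝ)| ≠ √2 := fun h ↦
    irrational_sqrt_two.ne_rat (m * |q|) (by push_cast; exact h.symm)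
  rw [Nat.floor_eq_iff (by positivity), le_div_iff₀ hpos, div_lt_iff₀ hpos, hne.le_iff_lt]
  rfl

lemma ratIndex_eq_two_mul_iff {q : ℚ} {m : ℕ} :
    q ≠ 0 ∧ ratIndex q = 2 * m ↔ (q : ℝ) ∈ sqrtTwoBand m := by
  rcases lt_trichotomy q 0 with hq | rfl | hq
  · have : (q : ℝ) ∉ sqrtTwoBand m := fun h ↦
      (pos_of_mem_sqrtTwoBand h).not_gt (by exact_mod_cast hq)
    simp only [ratIndex, if_pos hq, this, iff_false]
    omega
  · simpa using fun h ↦ (pos_of_mem_sqrtTwoBand h).ne rfl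
  · have hq' : (0 : ℝ) < q := by exact_mod_cast hq
    rw [← abs_of_pos hq', ← floor_sqrt_two_div_abs_eq_iff hq.ne', ratIndex, if_neg hq.not_gt]
    simp only [ne_eq, hq.ne', not_false_eq_true, true_and]
    omega

lemma ratIndex_eq_two_mul_add_one_iff {q : ℚ} {m : ℕ} :
    q ≠ 0 ∧ ratIndex q = 2 * m + 1 ↔ (q : ℝ) ∈ -sqrtTwoBand m := by
  rw [Set.mem_neg]
  rcases lt_trichotomy q 0 with hq | rfl | hq
  · have hq' : (0 : ℝ) < -q := by exact_mod_cast neg_pos.2 hq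
    rw [← abs_of_pos hq', abs_neg, ← floor_sqrt_two_div_abs_eq_iff hq.ne, ratIndex, if_pos hq]
    simp only [ne_eq, hq.ne, not_false_eq_true, true_and]
    omega
  · simpa using fun h ↦ (pos_of_mem_sqrtTwoBand h).ne rfl
  · have hq' : (0 : ℝ) < q := by exact_mod_cast hq
    have : -(q : ℝ) ∉ sqrtTwoBand m := fun h ↦
      (pos_of_mem_sqrtTwoBand h).not_gt (neg_neg_of_pos hq')
    simp only [ratIndex, if_neg hq.not_gt, this, iff_false]
    omega

lemma exists_setOf_ratIndex_eq_preimage (n : ℕ) : ∃ T : Set ℝ, IsOpen T ∧ T.OrdConnected ∧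
    T.Nonempty ∧ {q : ℚ | q ≠ 0 ∧ ratIndex q = n} = (↑) ⁻¹' T := by
  obtain ⟨m, rfl | rfl⟩ := Nat.even_or_odd' n
  · exact ⟨sqrtTwoBand m, isOpen_sqrtTwoBand m, ordConnected_sqrtTwoBand m,
      sqrtTwoBand_nonempty m, ext fun _ ↦ ratIndex_eq_two_mul_iff⟩
  · exact ⟨-sqrtTwoBand m, (isOpen_sqrtTwoBand m).neg,
      (ordConnected_sqrtTwoBand m).preimage_anti fun _ _ ↦ neg_le_neg,
      (sqrtTwoBand_nonempty m).neg, ext fun _ ↦ ratIndex_eq_two_mul_add_one_iff⟩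

lemma tendsto_ratIndex : Tendsto ratIndex (𝓝[≠] 0) atTop := by
  have hinv : Tendsto (fun q : ℚ ↦ ((|q|⁻¹ : ℚ) : ℝ)) (𝓝[≠] 0) atTop :=
    tendsto_ratCast_atTop_iff.2 (tendsto_inv_nhdsGT_zero.comp tendsto_abs_nhdsNE_zero)
  have h : Tendsto (fun q : ℚ ↦ √2 / |(q : ℝ)|) (𝓝[≠] 0) atTop := by
    simpa [div_eq_mul_inv] using hinv.const_mul_atTop (by positivity : (0 : ℝ) < √2)
  refine tendsto_atTop_mono (fun q ↦ ?_) (tendsto_nat_floor_atTop.comp h)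
  simp only [Function.comp_apply, ratIndex]
  omega

lemma eventually_setOf_ratIndex_subset {U : Set ℚ} (hU : U ∈ 𝓝 0) :
    ∀ᶠ n in atTop, {q : ℚ | q ≠ 0 ∧ ratIndex q = n} ⊆ U := by
  obtain ⟨ε, hε, hball⟩ := Metric.mem_nhds_iff.1 hU
  obtain ⟨N, hN⟩ := exists_nat_gt (√2 / ε)
  have hN0 : (0 : ℝ) < N := (by positivity : 0 < √2 / ε).trans hN
  rw [div_lt_iff₀ hε] at hN
  filter_upwards [eventually_ge_atTop (2 * N)] with n hn q ⟨hq, hqn⟩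
  have hband := (floor_sqrt_two_div_abs_eq_iff hq).1 rfl
  have hNm : (N : ℝ) ≤ ⌊√2 / |(q : ℝ)|⌋₊ := by
    simp only [ratIndex] at hqn
    exact_mod_cast (by split_ifs at hqn <;> omega : N ≤ ⌊√2 / |(q : ℝ)|⌋₊)
  apply hball
  rw [Metric.mem_ball, Rat.dist_eq, Rat.cast_zero, sub_zero]
  nlinarith [hband.1, abs_nonneg (q : ℝ)]

noncomputable def ratConvergingCopies : ConvergingCopies (0 : ℚ) ℚ where
  index := ratIndex
  isOpen_piece n := by
    obtain ⟨T, hT, -, -, h⟩ := exists_setOf_ratIndex_eq_preimage n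
    exact h ▸ hT.preimage Rat.continuous_coe_real
  homeo n := Classical.choice <| by
    obtain ⟨T, hT, hc, hne, h⟩ := exists_setOf_ratIndex_eq_preimage n
    exact h ▸ nonempty_homeomorph_rat_preimage hT hc hne
  tendsto_index := tendsto_ratIndex
  eventually_piece_subset := eventually_setOf_ratIndex_subset

theorem cbd_rat_c0_split_general
    {k : Type*} [NontriviallyNormedField k] [IsUltrametricDist k] :
    Nonempty ((ℚ →ᵇ k) ≃ₗᵢ[k] (k × C₀(ℕ, ℚ →ᵇ k))) :=
  ⟨ratConvergingCopies.linearIsometryEquiv⟩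

/-- Over a complete nonarchimedean valued field `k`, the Banach space `C_bd(ℚ, k)` of
bounded continuous functions `ℚ → k` is isometrically isomorphic to
`k × C₀(ℕ, C_bd(ℚ, k))` with the maximum norm on the product. -/
theorem cbd_rat_c0_split
    {k : Type*} [NontriviallyNormedField k] [IsUltrametricDist k] [CompleteSpace k] :
    Nonempty ((ℚ →ᵇ k) ≃ₗᵢ[k] (k × C₀(ℕ, ℚ →ᵇ k))) :=
  cbd_rat_c0_split_general
end

section
/- Let k be a complete nonarchimedean valued field whose value group |k×| is dense in (0,∞), let V be a Banach k-space, V' a reflexive Banach k-space, and ι : V → V' a norm-nonincreasing linear map such that for every reflexive Banach k-space W, composition with ι gives a bijection from norm-nonincreasing maps V' → W onto norm-nonincreasing maps V → W. Then the dual map ι* : (V')∨ → V∨ is an isometric isomorphism, and V' is isometrically isomorphic to the double dual V∨∨. -/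
open NormedSpace

/-- A Banach space is reflexive if the canonical map into its double dual is an
isometric isomorphism. -/
def IsReflexiveSpace (k : Type*) [NontriviallyNormedField k]
    (V : Type*) [NormedAddCommGroup V] [NormedSpace k V] : Prop :=
  Isometry (NormedSpace.inclusionInDoubleDual k V) ∧
    Function.Surjective (NormedSpace.inclusionInDoubleDual k V)

lemma isReflexiveSpace_self (k : Type*) [NontriviallyNormedField k] :
    IsReflexiveSpace k k := by
  have hnorm : ∀ x : k, ‖inclusionInDoubleDual k k x‖ = ‖x‖ := by
    intro x
    refine le_antisymm (double_dual_bound k k x) ?_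
    have := (inclusionInDoubleDual k k x).le_opNorm (ContinuousLinearMap.id k k)
    simpa [NormedSpace.dual_def, ContinuousLinearMap.norm_id] using this
  constructor
  · exact AddMonoidHomClass.isometry_of_norm _ hnorm
  · intro Φ
    refine ⟨Φ (ContinuousLinearMap.id k k), ?_⟩
    ext f
    have hf : f = (f 1) • ContinuousLinearMap.id k k := by
      ext
      simp [mul_comm]
    rw [NormedSpace.dual_def]
    rw [hf]
    simp [mul_comm]

private lemma aux_inv_smul_norm_le {k E : Type*} [NontriviallyNormedField k]
    [NormedAddCommGroup E] [NormedSpace k E]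
    {c : k} (hc : c ≠ 0) {x : E} (h : ‖x‖ ≤ ‖c‖) : ‖c⁻¹ • x‖ ≤ 1 := by
  rw [norm_smul, norm_inv, inv_mul_le_iff₀ (norm_pos_iff.mpr hc), mul_one]
  exact h

private lemma aux_norm_le_of_inv_smul {k E : Type*} [NontriviallyNormedField k]
    [NormedAddCommGroup E] [NormedSpace k E]
    {c : k} (hc : c ≠ 0) {x : E} (h : ‖c⁻¹ • x‖ ≤ 1) : ‖x‖ ≤ ‖c‖ := by
  rw [norm_smul, norm_inv, inv_mul_le_iff₀ (norm_pos_iff.mpr hc), mul_one] at h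
  exact h

/-- Precomposition with a fixed continuous linear map, as a linear map on duals. -/
private def precompLM {k V V' W : Type*} [NontriviallyNormedField k]
    [NormedAddCommGroup V] [NormedSpace k V]
    [NormedAddCommGroup V'] [NormedSpace k V']
    [NormedAddCommGroup W] [NormedSpace k W]
    (ι : V →L[k] V') : (V' →L[k] W) →ₗ[k] (V →L[k] W) where
  toFun g := g.comp ι
  map_add' f g := ContinuousLinearMap.add_comp f g ι
  map_smul' c f := ContinuousLinearMap.smul_comp c f ι

@[simp] private lemma precompLM_apply {k V V' W : Type*} [NontriviallyNormedField k]
    [NormedAddCommGroup V] [NormedSpace k V]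
    [NormedAddCommGroup V'] [NormedSpace k V']
    [NormedAddCommGroup W] [NormedSpace k W]
    (ι : V →L[k] V') (g : V' →L[k] W) : precompLM ι g = g.comp ι := rfl

/-- Universality lemma: if `ι : V → V'` is a norm-nonincreasing map into a reflexive
Banach space `V'` such that composition with `ι` is a bijection from norm-nonincreasing
maps `V' → W` onto norm-nonincreasing maps `V → W` for every reflexive Banach space `W`,
then the dual map of `ι` is an isometric isomorphism `(V')∨ ≅ V∨`, and `V'` is
isometrically isomorphic to the double dual `V∨∨`. -/
theorem universal_map_double_dual
    {k : Type u} [DenselyNormedField k] [IsUltrametricDist k] [CompleteSpace k]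
    {V V' : Type u}
    [NormedAddCommGroup V] [NormedSpace k V] [CompleteSpace V]
    [NormedAddCommGroup V'] [NormedSpace k V'] [CompleteSpace V']
    (hV' : IsReflexiveSpace k V')
    (ι : V →L[k] V') (hι : ‖ι‖ ≤ 1)
    (huniv : ∀ (W : Type u) [NormedAddCommGroup W] [NormedSpace k W] [CompleteSpace W],
      IsReflexiveSpace k W →
        Set.BijOn (fun f : V' →L[k] W => f.comp ι)
          {f : V' →L[k] W | ‖f‖ ≤ 1} {g : V →L[k] W | ‖g‖ ≤ 1}) :
    (∃ e : (V' →L[k] k) ≃ₗᵢ[k] (V →L[k] k), ∀ g : V' →L[k] k, e g = g.comp ι) ∧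
      Nonempty (V' ≃ₗᵢ[k] ((V →L[k] k) →L[k] k)) := by
  have hbij := huniv k (isReflexiveSpace_self k)
  have T : (V' →L[k] k) →ₗ[k] (V →L[k] k) := precompLM ι
  -- T is norm-nonincreasing
  have hle : ∀ g : V' →L[k] k, ‖(precompLM (W := k) ι) g‖ ≤ ‖g‖ := by
    intro g
    rw [precompLM_apply]
    calc ‖g.comp ι‖ ≤ ‖g‖ * ‖ι‖ := g.opNorm_comp_le ι
    _ ≤ ‖g‖ * 1 := mul_le_mul_of_nonneg_left hι (norm_nonneg g)
    _ = ‖g‖ := mul_one _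
  -- T is injective
  have hinj : Function.Injective (precompLM (W := k) ι) := by
    rw [injective_iff_map_eq_zero]
    intro f hf
    by_contra hf0
    have hfpos : 0 < ‖f‖ := norm_pos_iff.mpr hf0
    obtain ⟨c, hc1, -⟩ := NormedField.exists_lt_norm_lt k (norm_nonneg f) (lt_add_one ‖f‖)
    have hc0 : c ≠ 0 := by
      intro h; rw [h, norm_zero] at hc1; exact absurd hc1 (not_lt.mpr (norm_nonneg f))
    have hmem : c⁻¹ • f ∈ {f : V' →L[k] k | ‖f‖ ≤ 1} :=
      aux_inv_smul_norm_le hc0 hc1.le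
    have h0mem : (0 : V' →L[k] k) ∈ {f : V' →L[k] k | ‖f‖ ≤ 1} := by
      simp only [Set.mem_setOf_eq, norm_zero]; exact zero_le_one
    have heq : (c⁻¹ • f).comp ι = (0 : V' →L[k] k).comp ι := by
      have h1 : (c⁻¹ • f).comp ι = c⁻¹ • (f.comp ι) := ContinuousLinearMap.smul_comp _ _ _
      have h2 : f.comp ι = (0 : V →L[k] k) := by rw [← precompLM_apply ι f, hf]
      rw [h1, h2, smul_zero, ContinuousLinearMap.zero_comp]
    have hz := hbij.injOn hmem h0mem heq
    apply hf0
    have h3 : f = c • (c⁻¹ • f) := (smul_inv_smul₀ hc0 f).symm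
    rw [h3, hz, smul_zero]
  -- T is an isometry
  have hnorm : ∀ g : V' →L[k] k, ‖(precompLM (W := k) ι) g‖ = ‖g‖ := by
    intro g
    refine le_antisymm (hle g) ?_
    by_contra h'
    push_neg at h'
    have hg0 : g ≠ 0 := by
      intro h
      rw [h, norm_zero] at h'
      exact absurd h' (not_lt.mpr (norm_nonneg _))
    obtain ⟨c, hc1, hc2⟩ :=
      NormedField.exists_lt_norm_lt k (norm_nonneg ((precompLM (W := k) ι) g)) h'
    have hcpos : 0 < ‖c‖ := lt_of_le_of_lt (norm_nonneg _) hc1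
    have hc0 : c ≠ 0 := norm_pos_iff.mp hcpos
    have hmem : (fun f : V' →L[k] k => f.comp ι) (c⁻¹ • g) ∈ {g : V →L[k] k | ‖g‖ ≤ 1} := by
      show ‖(c⁻¹ • g).comp ι‖ ≤ 1
      rw [ContinuousLinearMap.smul_comp]
      exact aux_inv_smul_norm_le hc0 hc1.le
    obtain ⟨f, hf1, hf2⟩ := hbij.surjOn hmem
    have heq : f = c⁻¹ • g := hinj hf2
    rw [heq] at hf1
    have hf1' : ‖g‖ ≤ ‖c‖ := aux_norm_le_of_inv_smul hc0 hf1
    exact absurd (lt_of_le_of_lt hf1' hc2) (lt_irrefl _)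
  -- T is surjective
  have hsurj : Function.Surjective (precompLM (W := k) ι) := by
    intro g
    rcases eq_or_ne g 0 with rfl | hg0
    · exact ⟨0, map_zero _⟩
    · obtain ⟨c, hc1, -⟩ := NormedField.exists_lt_norm_lt k (norm_nonneg g) (lt_add_one ‖g‖)
      have hcpos : 0 < ‖c‖ := lt_of_le_of_lt (norm_nonneg _) hc1
      have hc0 : c ≠ 0 := norm_pos_iff.mp hcpos
      have hmem : c⁻¹ • g ∈ {g : V →L[k] k | ‖g‖ ≤ 1} :=
        aux_inv_smul_norm_le hc0 hc1.le
      obtain ⟨f, -, hf2⟩ := hbij.surjOn hmem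
      refine ⟨c • f, ?_⟩
      have hf2' : f.comp ι = c⁻¹ • g := hf2
      rw [map_smul, precompLM_apply, hf2']
      exact smul_inv_smul₀ hc0 g
  let Teq : (V' →L[k] k) ≃ₗ[k] (V →L[k] k) :=
    LinearEquiv.ofBijective (precompLM ι) ⟨hinj, hsurj⟩
  let e : (V' →L[k] k) ≃ₗᵢ[k] (V →L[k] k) := ⟨Teq, hnorm⟩
  have heapp : ∀ g : V' →L[k] k, e g = g.comp ι := fun g => rfl
  refine ⟨⟨e, heapp⟩, ?_⟩
  -- second part: V' ≃ double dual of V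
  let incl : V' →ₗᵢ[k] ((V' →L[k] k) →L[k] k) :=
    ⟨(inclusionInDoubleDual k V' : V' →ₗ[k] ((V' →L[k] k) →L[k] k)),
      fun x => by
        have h0 : inclusionInDoubleDual k V' 0 = 0 := map_zero _
        exact Isometry.norm_map_of_map_zero (f := ⇑(inclusionInDoubleDual k V')) hV'.1 h0 x⟩
  have j : V' ≃ₗᵢ[k] ((V' →L[k] k) →L[k] k) :=
    LinearIsometryEquiv.ofSurjective incl hV'.2
  -- dual congruence induced by e
  let S : (((V' →L[k] k) →L[k] k)) →ₗ[k] ((V →L[k] k) →L[k] k) :=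
    precompLM e.symm.toLinearIsometry.toContinuousLinearMap
  have hSnorm : ∀ Φ, ‖S Φ‖ = ‖Φ‖ := fun Φ =>
    ContinuousLinearMap.opNorm_comp_linearIsometryEquiv Φ e.symm
  have hSsurj : Function.Surjective S := by
    intro Ψ
    refine ⟨Ψ.comp e.toLinearIsometry.toContinuousLinearMap, ?_⟩
    show (Ψ.comp _).comp _ = Ψ
    ext x
    simp
  have hSinj : Function.Injective S := by
    intro Φ₁ Φ₂ h
    have h' : Φ₁.comp e.symm.toLinearIsometry.toContinuousLinearMap
        = Φ₂.comp e.symm.toLinearIsometry.toContinuousLinearMap := h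
    ext x
    have := congrArg (fun Φ => Φ (e x)) h'
    simpa using this
  let Seq : (((V' →L[k] k) →L[k] k)) ≃ₗ[k] ((V →L[k] k) →L[k] k) :=
    LinearEquiv.ofBijective S ⟨hSinj, hSsurj⟩
  exact ⟨j.trans ⟨Seq, hSnorm⟩⟩
end
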